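/- Suppose the coefficients p, D, I, U are positive constants (independent of the phenotypic trait) with D < p in the case of semi-random mating (respectively D < 1 =: p in the case of assortative mating). Then for every solution (μ_t)_{t≥0} of the measure-valued evolution equation with μ₀(F) > 0, the total mass M(t) = μ_t(F) satisfies lim_{t→∞} M(t) = (p − D)/(IU). Consequently, all solutions with positive initial mass converge to the set 𝒜 = {μ ∈ M(F) : μ(F) = (p−D)/(IU)}, and 𝒜 is invariant under the equation. -/

import Mathlib

open MeasureTheory Filter ENNReal

noncomputable section

/-- Semi-random mating rate: `m(x,y;μ) = p(x)p(y) / ∫ p dμ`. -/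
def semiRandomRate {E : Type*} [MeasurableSpace E] (p : E → ℝ) :
    E → E → Measure E → ℝ :=
  fun x y μ => p x * p y / ∫ z, p z ∂μ

/-- Assortative mating rate. -/
def assortativeRate {E : Type*} [MeasurableSpace E] (a : E → E → ℝ) :
    E → E → Measure E → ℝ :=
  fun x y μ => a x y / (2 * ∫ r, a x r ∂μ) + a x y / (2 * ∫ r, a y r ∂μ)

/-- Mild (integrated) form of the measure-valued evolution equation. -/
def IsMildSolution {E : Type*} [MeasurableSpace E] (F : Set E)
    (m : E → E → Measure E → ℝ) (K : E → E → Measure E)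
    (D I : E → ℝ) (U : E → E → ℝ)
    (μ₀ : Measure E) (μ : ℝ → Measure E) : Prop :=
  μ 0 = μ₀ ∧
  (∀ t : ℝ, 0 ≤ t → IsFiniteMeasure (μ t) ∧ μ t Fᶜ = 0) ∧
  ∀ f : E → ℝ, Measurable f → (∃ Cf : ℝ, ∀ x, |f x| ≤ Cf) →
    ∀ t : ℝ, 0 ≤ t →
      (∫ x, f x ∂(μ t)) = (∫ x, f x ∂μ₀)
        + ∫ s in (0:ℝ)..t,
            ((∫ x, ∫ y, m x y (μ s) * ∫ z, f z ∂(K x y) ∂(μ s) ∂(μ s))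
              - ∫ x, f x * (D x + I x * ∫ y, U x y ∂(μ s)) ∂(μ s))


/-! Testing the equation against the constant `1` shows that the total mass `M(t)` solves the
logistic equation `M' = M ((p - D) - I U M)` in integrated form: the death term is
`(D + I U M) M`, and the birth term integrates to `p M`, directly for semi-random mating and, for
assortative mating, after Fubini and the symmetry of the preference `a`. Solutions of the
integrated equation are differentiable, so by uniqueness for Lipschitz ODEs `M` is the explicit
logistic curve, which tends to `(p - D) / (I U)` and stays there when started there. -/

open Set Topology

def logisticSolution (c b x₀ t : ℝ) : ℝ :=
  c * x₀ / (b * x₀ + (c - b * x₀) * Real.exp (-c * t))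

section Logistic

variable {c b x₀ : ℝ}

lemma logisticSolution_denom_pos (hc : 0 < c) (hb : 0 < b) (hx₀ : 0 < x₀) {t : ℝ} (ht : 0 ≤ t) :
    0 < b * x₀ + (c - b * x₀) * Real.exp (-c * t) := by
  have h1 : Real.exp (-c * t) ≤ 1 := Real.exp_le_one_iff.2 (by nlinarith)
  have h2 : 0 < Real.exp (-c * t) := Real.exp_pos _
  rcases le_or_gt (b * x₀) c with h | h <;> nlinarith

lemma logisticSolution_zero (hc : 0 < c) : logisticSolution c b x₀ 0 = x₀ := by
  simp only [logisticSolution, mul_zero, Real.exp_zero, mul_one, add_sub_cancel]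
  exact mul_div_cancel_left₀ x₀ hc.ne'

lemma logisticSolution_nonneg (hc : 0 < c) (hb : 0 < b) (hx₀ : 0 < x₀) {t : ℝ} (ht : 0 ≤ t) :
    0 ≤ logisticSolution c b x₀ t :=
  div_nonneg (by positivity) (logisticSolution_denom_pos hc hb hx₀ ht).le

lemma logisticSolution_le_max (hc : 0 < c) (hb : 0 < b) (hx₀ : 0 < x₀) {t : ℝ} (ht : 0 ≤ t) :
    logisticSolution c b x₀ t ≤ max (c / b) x₀ := by
  have hden := logisticSolution_denom_pos hc hb hx₀ ht
  have h1 : Real.exp (-c * t) ≤ 1 := Real.exp_le_one_iff.2 (by nlinarith)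
  have h2 : 0 < Real.exp (-c * t) := Real.exp_pos _
  rcases le_or_gt (b * x₀) c with h | h
  · refine le_max_of_le_left ?_
    rw [logisticSolution, div_le_div_iff₀ hden hb]
    nlinarith [mul_nonneg (mul_nonneg hc.le (sub_nonneg.2 h)) h2.le]
  · refine le_max_of_le_right ?_
    rw [logisticSolution, div_le_iff₀ hden]
    nlinarith [mul_nonneg (mul_nonneg hx₀.le (sub_nonneg.2 h.le)) (sub_nonneg.2 h1)]

lemma hasDerivAt_logisticSolution (hc : 0 < c) (hb : 0 < b) (hx₀ : 0 < x₀) {t : ℝ} (ht : 0 ≤ t) :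
    HasDerivAt (logisticSolution c b x₀)
      (logisticSolution c b x₀ t * (c - b * logisticSolution c b x₀ t)) t := by
  have hden := (logisticSolution_denom_pos hc hb hx₀ ht).ne'
  have hexp : HasDerivAt (fun t => Real.exp (-c * t)) (Real.exp (-c * t) * -c) t := by
    simpa using ((hasDerivAt_id t).const_mul (-c)).exp
  refine ((hasDerivAt_const t (c * x₀)).div ((hexp.const_mul (c - b * x₀)).const_add (b * x₀))
    hden).congr_deriv ?_
  simp only [logisticSolution]
  generalize Real.exp (-c * t) = e at hden ⊢
  field_simp
  ring

lemma tendsto_logisticSolution (hc : 0 < c) (hb : 0 < b) (hx₀ : 0 < x₀) :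
    Tendsto (logisticSolution c b x₀) atTop (𝓝 (c / b)) := by
  have hexp : Tendsto (fun t => Real.exp (-c * t)) atTop (𝓝 0) :=
    Real.tendsto_exp_atBot.comp (tendsto_id.const_mul_atTop_of_neg (neg_lt_zero.2 hc))
  have hden := (hexp.const_mul (c - b * x₀)).const_add (b * x₀)
  rw [mul_zero, add_zero] at hden
  have hlim := (tendsto_const_nhds (x := c * x₀)).div hden (by positivity)
  rwa [mul_div_mul_right c b hx₀.ne'] at hlim

lemma logisticSolution_div (hc : 0 < c) (hb : 0 < b) (t : ℝ) :
    logisticSolution c b (c / b) t = c / b := by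
  simp only [logisticSolution, mul_div_cancel₀ c hb.ne', sub_self, zero_mul, add_zero]
  field_simp

lemma mul_sub_mul_le (hb : 0 < b) (x : ℝ) : x * (c - b * x) ≤ c ^ 2 / (4 * b) := by
  rw [le_div_iff₀ (by positivity)]
  nlinarith [sq_nonneg (c - 2 * b * x)]

lemma abs_mul_sub_mul_le (hc : 0 < c) (hb : 0 < b) {x R : ℝ} (hx : 0 ≤ x) (hxR : x ≤ R) :
    |x * (c - b * x)| ≤ R * (c + b * R) := by
  have hR : 0 ≤ R := hx.trans hxR
  rw [abs_le]
  constructor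
  · nlinarith [mul_nonneg hx hc.le, mul_le_mul hxR hxR hx hR, mul_nonneg hR hc.le]
  · nlinarith [mul_nonneg (mul_nonneg hb.le hx) hx, mul_le_mul_of_nonneg_right hxR hc.le,
      mul_nonneg (mul_nonneg hb.le hR) hR]

lemma lipschitzOnWith_mul_sub_mul (hc : 0 < c) (hb : 0 < b) {R : ℝ} (hR : 0 ≤ R) :
    LipschitzOnWith (c + 2 * b * R).toNNReal (fun x => x * (c - b * x)) (Icc 0 R) := by
  refine LipschitzOnWith.of_dist_le_mul fun x hx y hy => ?_
  rw [Real.dist_eq, Real.dist_eq, Real.coe_toNNReal _ (by positivity),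
    show x * (c - b * x) - y * (c - b * y) = (c - b * (x + y)) * (x - y) by ring, abs_mul]
  gcongr
  rw [abs_le]
  constructor <;> nlinarith [hx.1, hx.2, hy.1, hy.2]

end Logistic

lemma integrableOn_Ioc_of_forall_lt {E : Type*} [NormedAddCommGroup E] {f : ℝ → E} {a b C : ℝ}
    (hf : ∀ t < b, IntegrableOn f (Ioc a t)) (hC : ∀ x ∈ Ioc a b, ‖f x‖ ≤ C) :
    IntegrableOn f (Ioc a b) := by
  rcases le_or_gt b a with hba | hab
  · simp [Ioc_eq_empty_of_le hba]
  obtain ⟨u, -, hub, hu⟩ := exists_seq_strictMono_tendsto b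
  refine integrableOn_Ioc_of_intervalIntegral_norm_bounded_right (I := C * volume.real (Ioc a b))
    (fun n => hf _ (hub n)) hu (Eventually.of_forall fun n => ?_)
  have hsub : Ioc a (u n) ⊆ Ioc a b := Ioc_subset_Ioc_right (hub n).le
  have hC0 : 0 ≤ C := (norm_nonneg _).trans (hC b ⟨hab, le_rfl⟩)
  calc (∫ x in Ioc a (u n), ‖f x‖) ≤ ‖∫ x in Ioc a (u n), ‖f x‖‖ := Real.le_norm_self _
    _ ≤ C * volume.real (Ioc a (u n)) :=
        norm_setIntegral_le_of_norm_le_const measure_Ioc_lt_top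
          fun x hx => by simpa using hC x (hsub hx)
    _ ≤ C * volume.real (Ioc a b) := by
        gcongr
        exact measure_Ioc_lt_top.ne

section IntegralEquation

variable {g M : ℝ → ℝ}

lemma le_add_mul_of_eq_add_integral {B : ℝ} (hB : 0 ≤ B) (hg : ∀ x, g x ≤ B)
    (heq : ∀ t, 0 ≤ t → M t = M 0 + ∫ s in (0 : ℝ)..t, g (M s)) {t : ℝ} (ht : 0 ≤ t) :
    M t ≤ M 0 + t * B := by
  rw [heq t ht, add_le_add_iff_left]
  by_cases hi : IntervalIntegrable (fun s => g (M s)) volume 0 t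
  · simpa using intervalIntegral.integral_mono_on ht hi intervalIntegrable_const fun s _ => hg (M s)
  · rw [intervalIntegral.integral_undef hi]
    positivity

/-- If the integral were undefined (hence `0`) past some time `τ`, the equation would freeze `M`
there, making the integrand constant and hence integrable past `τ` after all. -/
lemma intervalIntegrable_of_eq_add_integral
    (hbdd : ∀ T, ∃ C, ∀ t ∈ Icc 0 T, ‖g (M t)‖ ≤ C)
    (heq : ∀ t, 0 ≤ t → M t = M 0 + ∫ s in (0 : ℝ)..t, g (M s)) {T : ℝ} (hT : 0 ≤ T) :
    IntervalIntegrable (fun s => g (M s)) volume 0 T := by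
  set h := fun s => g (M s)
  rw [intervalIntegrable_iff_integrableOn_Ioc_of_le hT]
  by_contra hT'
  set S := {t | 0 ≤ t ∧ ¬ IntegrableOn h (Ioc 0 t)}
  have hS : S.Nonempty := ⟨T, hT, hT'⟩
  set τ := sInf S
  have hτ : 0 ≤ τ := le_csInf hS fun _ ht => ht.1
  have below : ∀ t < τ, IntegrableOn h (Ioc 0 t) := by
    intro t ht
    rcases lt_or_ge t 0 with ht0 | ht0
    · simp [Ioc_eq_empty_of_le ht0.le]
    · by_contra hi
      exact ht.not_ge (csInf_le ⟨0, fun _ hs => hs.1⟩ ⟨ht0, hi⟩)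
  have above : ∀ t, τ < t → ¬ IntegrableOn h (Ioc 0 t) := by
    intro t ht hi
    obtain ⟨s, hs, hst⟩ := exists_lt_of_csInf_lt hS ht
    exact hs.2 (hi.mono_set (Ioc_subset_Ioc_right hst.le))
  have frozen : ∀ t, τ < t → M t = M 0 := by
    intro t ht
    rw [heq t (hτ.trans ht.le), intervalIntegral.integral_undef, add_zero]
    rw [intervalIntegrable_iff_integrableOn_Ioc_of_le (hτ.trans ht.le)]
    exact above t ht
  obtain ⟨C, hC⟩ := hbdd τ
  have hleft : IntegrableOn h (Ioc 0 τ) :=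
    integrableOn_Ioc_of_forall_lt below fun x hx => hC x (Ioc_subset_Icc_self hx)
  have hright : IntegrableOn h (Ioc τ (τ + 1)) :=
    (integrableOn_const (C := g (M 0)) measure_Ioc_lt_top.ne).congr_fun
      (fun t ht => by simp only [h, frozen t ht.1]) measurableSet_Ioc
  refine above (τ + 1) (lt_add_one τ) ?_
  rw [← Ioc_union_Ioc_eq_Ioc hτ (by linarith)]
  exact hleft.union hright

lemma continuousOn_of_eq_add_integral
    (heq : ∀ t, 0 ≤ t → M t = M 0 + ∫ s in (0 : ℝ)..t, g (M s))
    (hint : ∀ t, 0 ≤ t → IntervalIntegrable (fun s => g (M s)) volume 0 t) {T : ℝ} (hT : 0 ≤ T) :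
    ContinuousOn M (Icc 0 T) := by
  have hprim := intervalIntegral.continuousOn_primitive_interval' (hint T hT) left_mem_uIcc
  rw [uIcc_of_le hT] at hprim
  exact (hprim.const_add (M 0)).congr fun t ht => heq t ht.1

lemma hasDerivWithinAt_of_eq_add_integral (hg : Continuous g)
    (heq : ∀ t, 0 ≤ t → M t = M 0 + ∫ s in (0 : ℝ)..t, g (M s))
    (hint : ∀ t, 0 ≤ t → IntervalIntegrable (fun s => g (M s)) volume 0 t) {T t : ℝ}
    (ht : t ∈ Ico 0 T) :
    HasDerivWithinAt M (g (M t)) (Ici t) t := by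
  have hcont : ContinuousOn (fun s => g (M s)) (Icc 0 T) :=
    hg.comp_continuousOn (continuousOn_of_eq_add_integral heq hint (ht.1.trans ht.2.le))
  have hmem : Icc 0 T ∈ 𝓝[>] t := Icc_mem_nhdsGT_of_mem ht
  have hderiv := intervalIntegral.integral_hasDerivWithinAt_right (s := Ici t) (hint t ht.1)
    ⟨Icc 0 T, hmem, hcont.aestronglyMeasurable measurableSet_Icc⟩
    ((hcont t (Ico_subset_Icc_self ht)).mono_of_mem_nhdsWithin hmem)
  exact (hderiv.const_add (M 0)).congr (fun s hs => heq s (ht.1.trans hs)) (heq t ht.1)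

end IntegralEquation

theorem eq_logisticSolution_of_eq_add_integral {c b : ℝ} (hc : 0 < c) (hb : 0 < b) {M : ℝ → ℝ}
    (hM : ∀ t, 0 ≤ M t) (hM₀ : 0 < M 0)
    (heq : ∀ t, 0 ≤ t → M t = M 0 + ∫ s in (0 : ℝ)..t, M s * (c - b * M s))
    {T : ℝ} (hT : 0 ≤ T) :
    M T = logisticSolution c b (M 0) T := by
  set g := fun x : ℝ => x * (c - b * x)
  have hB : 0 ≤ c ^ 2 / (4 * b) := by positivity
  have hle : ∀ T, ∀ t ∈ Icc 0 T, M t ≤ M 0 + T * (c ^ 2 / (4 * b)) := fun T t ht =>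
    (le_add_mul_of_eq_add_integral (g := g) hB (mul_sub_mul_le hb) heq ht.1).trans
      (by gcongr; exact ht.2)
  have hint : ∀ t, 0 ≤ t → IntervalIntegrable (fun s => g (M s)) volume 0 t :=
    fun t ht => intervalIntegrable_of_eq_add_integral
      (fun T => ⟨_, fun t ht => by
        rw [Real.norm_eq_abs]; exact abs_mul_sub_mul_le hc hb (hM t) (hle T t ht)⟩)
      heq ht
  set R := max (M 0 + T * (c ^ 2 / (4 * b))) (max (c / b) (M 0))
  have hR : 0 ≤ R := hM₀.le.trans ((le_max_right _ _).trans (le_max_right _ _))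
  exact ODE_solution_unique_of_mem_Icc_right (fun _ _ => lipschitzOnWith_mul_sub_mul hc hb hR)
    (continuousOn_of_eq_add_integral heq hint hT)
    (fun t ht => hasDerivWithinAt_of_eq_add_integral (by fun_prop) heq hint ht)
    (fun t ht => ⟨hM t, (hle T t (Ico_subset_Icc_self ht)).trans (le_max_left _ _)⟩)
    (fun t ht => (hasDerivAt_logisticSolution hc hb hM₀ ht.1).continuousAt.continuousWithinAt)
    (fun t ht => (hasDerivAt_logisticSolution hc hb hM₀ ht.1).hasDerivWithinAt)
    (fun t ht => ⟨logisticSolution_nonneg hc hb hM₀ ht.1,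
      (logisticSolution_le_max hc hb hM₀ ht.1).trans (le_max_right _ _)⟩)
    (logisticSolution_zero hc).symm ⟨hT, le_rfl⟩

lemma integral_integral_semiRandomRate_const {E : Type*} [MeasurableSpace E] {p : ℝ} (hp : p ≠ 0)
    (μ : Measure E) : ∫ x, ∫ y, semiRandomRate (fun _ => p) x y μ ∂μ ∂μ = p * μ.real univ := by
  simp only [semiRandomRate, integral_const, smul_eq_mul]
  rcases eq_or_ne (μ.real univ) 0 with h | h
  · simp [h]
  · field_simp

section Assortative

variable {E : Type*} [MeasurableSpace E] {F : Set E} {a : E → E → ℝ} {al au : ℝ}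
  {μ : Measure E} [IsFiniteMeasure μ]

lemma integrable_preference (hmeas : Measurable fun q : E × E => a q.1 q.2)
    (hbound : ∀ x ∈ F, ∀ y ∈ F, al ≤ a x y ∧ a x y ≤ au) (hal : 0 ≤ al) (hμ : μ Fᶜ = 0)
    {x : E} (hx : x ∈ F) : Integrable (a x) μ := by
  refine .of_bound (hmeas.comp measurable_prodMk_left).aestronglyMeasurable au ?_
  filter_upwards [ae_iff.2 hμ] with y hy
  obtain ⟨hlow, hup⟩ := hbound x hx y hy
  rw [Real.norm_of_nonneg (hal.trans hlow)]
  exact hup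

lemma mul_measureReal_le_integral_preference (hmeas : Measurable fun q : E × E => a q.1 q.2)
    (hbound : ∀ x ∈ F, ∀ y ∈ F, al ≤ a x y ∧ a x y ≤ au) (hal : 0 ≤ al) (hμ : μ Fᶜ = 0)
    {x : E} (hx : x ∈ F) : al * μ.real univ ≤ ∫ r, a x r ∂μ := by
  have := integral_mono_ae (integrable_const al) (integrable_preference hmeas hbound hal hμ hx)
    (by filter_upwards [ae_iff.2 hμ] with y hy using (hbound x hx y hy).1)
  rwa [integral_const, smul_eq_mul, mul_comm] at this

lemma integral_integral_assortativeRate (hsymm : ∀ x y, a x y = a y x)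
    (hmeas : Measurable fun q : E × E => a q.1 q.2) (hal : 0 < al)
    (hbound : ∀ x ∈ F, ∀ y ∈ F, al ≤ a x y ∧ a x y ≤ au) (hμ : μ Fᶜ = 0) :
    ∫ x, ∫ y, assortativeRate a x y μ ∂μ ∂μ = μ.real univ := by
  rcases eq_zero_or_neZero μ with rfl | _
  · simp
  set A := fun x => ∫ r, a x r ∂μ
  have hF : ∀ᵐ x ∂μ, x ∈ F := ae_iff.2 hμ
  have hAF : ∀ y ∈ F, al * μ.real univ ≤ A y :=
    fun y => mul_measureReal_le_integral_preference hmeas hbound hal.le hμ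
  have hA : ∀ y ∈ F, A y ≠ 0 := fun y hy =>
    (lt_of_lt_of_le (mul_pos hal measureReal_univ_pos) (hAF y hy)).ne'
  set w := fun q : E × E => a q.1 q.2 / (2 * A q.2)
  have hw : Integrable w (μ.prod μ) := by
    have hAmeas : Measurable A := hmeas.stronglyMeasurable.integral_prod_right'.measurable
    have hwmeas : Measurable w := hmeas.div (measurable_const.mul (hAmeas.comp measurable_snd))
    refine .of_bound hwmeas.aestronglyMeasurable (au / (2 * (al * μ.real univ))) ?_
    filter_upwards [Measure.quasiMeasurePreserving_fst.ae hF,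
      Measure.quasiMeasurePreserving_snd.ae hF] with q hq₁ hq₂
    have hpos : 0 < al * μ.real univ := mul_pos hal measureReal_univ_pos
    obtain ⟨hlow, hup⟩ := hbound q.1 hq₁ q.2 hq₂
    rw [Real.norm_of_nonneg (div_nonneg (by linarith) (by linarith [hAF q.2 hq₂]))]
    exact div_le_div₀ (by linarith) hup (by positivity) (by linarith [hAF q.2 hq₂])
  have hinner : ∀ᵐ x ∂μ, ∫ y, assortativeRate a x y μ ∂μ = 1 / 2 + ∫ y, w (x, y) ∂μ := by
    filter_upwards [hF, hw.prod_right_ae] with x hx hwx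
    change ∫ y, a x y / (2 * A x) + w (x, y) ∂μ = _
    rw [integral_add ((integrable_preference hmeas hbound hal.le hμ hx).div_const _) hwx,
      integral_div]
    change A x / (2 * A x) + _ = _
    rw [div_mul_cancel_right₀ (hA x hx), one_div]
  have hcolumn : ∀ᵐ y ∂μ, ∫ x, w (x, y) ∂μ = 1 / 2 := by
    filter_upwards [hF] with y hy
    change ∫ x, a x y / (2 * A y) ∂μ = _
    rw [integral_div, show ∫ x, a x y ∂μ = A y from integral_congr_ae (ae_of_all _ (hsymm · y))]
    field_simp [hA y hy]
  calc ∫ x, ∫ y, assortativeRate a x y μ ∂μ ∂μ = ∫ x, (1 / 2 + ∫ y, w (x, y) ∂μ) ∂μ :=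
        integral_congr_ae hinner
    _ = μ.real univ / 2 + ∫ y, ∫ x, w (x, y) ∂μ ∂μ := by
        rw [integral_add (integrable_const _) hw.integral_prod_left,
          integral_integral_swap (f := fun x y => w (x, y)) hw]
        simp [div_eq_mul_inv]
    _ = μ.real univ := by
        rw [integral_congr_ae hcolumn, integral_const, smul_eq_mul]
        ring

end Assortative

namespace IsMildSolution

variable {E : Type*} [MeasurableSpace E] {F : Set E} {m : E → E → Measure E → ℝ}
  {K : E → E → Measure E} {p D I U : ℝ} {ν₀ : Measure E} {ν : ℝ → Measure E}

lemma toReal_measure_eq_measureReal_univ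
    (hν : IsMildSolution F m K (fun _ => D) (fun _ => I) (fun _ _ => U) ν₀ ν) {t : ℝ}
    (ht : 0 ≤ t) : (ν t F).toReal = (ν t).real univ := by
  rw [measure_congr (ae_eq_univ.2 (hν.2.1 t ht).2)]
  rfl

lemma toReal_measure_pos
    (hν : IsMildSolution F m K (fun _ => D) (fun _ => I) (fun _ _ => U) ν₀ ν) (hpos : 0 < ν₀ F) :
    0 < (ν₀ F).toReal := by
  have := (hν.2.1 0 le_rfl).1
  rw [hν.1] at this
  exact ENNReal.toReal_pos hpos.ne' (measure_ne_top _ _)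

lemma measureReal_univ_eq_add_integral
    (hν : IsMildSolution F m K (fun _ => D) (fun _ => I) (fun _ _ => U) ν₀ ν)
    (hK : ∀ x y, IsProbabilityMeasure (K x y))
    (hbirth : ∀ μ : Measure E, IsFiniteMeasure μ → μ Fᶜ = 0 →
      ∫ x, ∫ y, m x y μ ∂μ ∂μ = p * μ.real univ) {t : ℝ} (ht : 0 ≤ t) :
    (ν t).real univ = (ν 0).real univ +
      ∫ s in (0 : ℝ)..t, (ν s).real univ * ((p - D) - I * U * (ν s).real univ) := by
  obtain ⟨h0, hfin, hmild⟩ := hν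
  have hK1 : ∀ x y, ∫ _z, (1 : ℝ) ∂K x y = 1 := fun x y => by simp
  have := hmild (fun _ => 1) measurable_const ⟨1, by simp⟩ t ht
  simp only [integral_const, smul_eq_mul, mul_one, one_mul, hK1] at this
  rw [h0, this]
  congr 1
  refine intervalIntegral.integral_congr fun s hs => ?_
  have hs : 0 ≤ s := by rw [uIcc_of_le ht] at hs; exact hs.1
  have := (hfin s hs).1
  simp only [hbirth (ν s) this (hfin s hs).2]
  ring

lemma toReal_measure_eq_logisticSolution
    (hν : IsMildSolution F m K (fun _ => D) (fun _ => I) (fun _ _ => U) ν₀ ν)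
    (hK : ∀ x y, IsProbabilityMeasure (K x y))
    (hbirth : ∀ μ : Measure E, IsFiniteMeasure μ → μ Fᶜ = 0 →
      ∫ x, ∫ y, m x y μ ∂μ ∂μ = p * μ.real univ)
    (hc : 0 < p - D) (hb : 0 < I * U) (hpos : 0 < ν₀ F) {t : ℝ} (ht : 0 ≤ t) :
    (ν t F).toReal = logisticSolution (p - D) (I * U) (ν₀ F).toReal t := by
  have h0 : (ν₀ F).toReal = (ν 0).real univ := by
    rw [← hν.1]; exact hν.toReal_measure_eq_measureReal_univ le_rfl
  rw [hν.toReal_measure_eq_measureReal_univ ht, h0]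
  exact eq_logisticSolution_of_eq_add_integral hc hb (fun _ => measureReal_nonneg)
    (h0 ▸ hν.toReal_measure_pos hpos)
    (fun t ht => hν.measureReal_univ_eq_add_integral hK hbirth ht) ht

end IsMildSolution

theorem mass_stabilization_and_attractor_general
    {d : ℕ} (F : Set (EuclideanSpace ℝ (Fin d)))
    (K : EuclideanSpace ℝ (Fin d) → EuclideanSpace ℝ (Fin d) →
      Measure (EuclideanSpace ℝ (Fin d)))
    (hKprob : ∀ x y, IsProbabilityMeasure (K x y))
    -- constant coefficients
    (p D I U : ℝ)
    (hppos : 0 < p) (hIpos : 0 < I) (hUpos : 0 < U)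
    (m : EuclideanSpace ℝ (Fin d) → EuclideanSpace ℝ (Fin d) →
      Measure (EuclideanSpace ℝ (Fin d)) → ℝ)
    -- either semi-random mating with D < p, or assortative mating with D < 1 =: p
    (hcase :
      (D < p ∧ m = semiRandomRate (fun _ => p)) ∨
      (p = 1 ∧ D < 1 ∧ ∃ a : EuclideanSpace ℝ (Fin d) → EuclideanSpace ℝ (Fin d) → ℝ,
        (∀ x y, a x y = a y x) ∧
        Measurable (fun q : EuclideanSpace ℝ (Fin d) × EuclideanSpace ℝ (Fin d) => a q.1 q.2) ∧
        (∃ al au : ℝ, 0 < al ∧ (∀ x ∈ F, ∀ y ∈ F, al ≤ a x y ∧ a x y ≤ au)) ∧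
        m = assortativeRate a))
    (μ₀ : Measure (EuclideanSpace ℝ (Fin d)))
    (hμ₀pos : 0 < μ₀ F)
    (μ : ℝ → Measure (EuclideanSpace ℝ (Fin d)))
    (hμ : IsMildSolution F m K (fun _ => D) (fun _ => I) (fun _ _ => U) μ₀ μ) :
    -- the total mass converges to the carrying capacity (p − D)/(IU),
    -- i.e. every solution with positive initial mass converges to the set 𝒜
    Tendsto (fun t => (μ t F).toReal) atTop (nhds ((p - D) / (I * U))) ∧
    -- the set 𝒜 = {μ : μ(F) = (p−D)/(IU)} is invariant under the equation
    (∀ (ν₀ : Measure (EuclideanSpace ℝ (Fin d)))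
        (ν : ℝ → Measure (EuclideanSpace ℝ (Fin d))),
      IsFiniteMeasure ν₀ → ν₀ Fᶜ = 0 →
      IsMildSolution F m K (fun _ => D) (fun _ => I) (fun _ _ => U) ν₀ ν →
      ν₀ F = ENNReal.ofReal ((p - D) / (I * U)) →
      ∀ t : ℝ, 0 ≤ t → ν t F = ENNReal.ofReal ((p - D) / (I * U))) := by
  have hc : 0 < p - D := by
    rcases hcase with ⟨h, -⟩ | ⟨rfl, h, -⟩ <;> exact sub_pos.2 h
  have hb : 0 < I * U := mul_pos hIpos hUpos
  have hbirth : ∀ μ : Measure (EuclideanSpace ℝ (Fin d)), IsFiniteMeasure μ → μ Fᶜ = 0 →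
      ∫ x, ∫ y, m x y μ ∂μ ∂μ = p * μ.real univ := by
    rcases hcase with ⟨-, rfl⟩ | ⟨rfl, -, a, hsymm, hmeas, ⟨al, au, hal, hbound⟩, rfl⟩
    · exact fun μ _ _ => integral_integral_semiRandomRate_const hppos.ne' μ
    · intro μ _ hμF
      rw [one_mul]
      exact integral_integral_assortativeRate hsymm hmeas hal hbound hμF
  refine ⟨?_, fun ν₀ ν _ _ hν hν₀ t ht => ?_⟩
  · refine (tendsto_logisticSolution hc hb (hμ.toReal_measure_pos hμ₀pos)).congr'
      ((eventually_ge_atTop 0).mono fun t ht => ?_)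
    exact (hμ.toReal_measure_eq_logisticSolution hKprob hbirth hc hb hμ₀pos ht).symm
  · have hν₀pos : 0 < ν₀ F := hν₀ ▸ ENNReal.ofReal_pos.2 (div_pos hc hb)
    have := (hν.2.1 t ht).1
    rw [← ENNReal.ofReal_toReal (measure_ne_top (ν t) F),
      hν.toReal_measure_eq_logisticSolution hKprob hbirth hc hb hν₀pos ht, hν₀,
      ENNReal.toReal_ofReal (div_pos hc hb).le, logisticSolution_div hc hb]

/-- Stabilization of the population size and the global
attractor `𝒜`.  If `p, D, I, U` are positive constants with `D < p` in the
semi-random case (resp. `D < 1 =: p` in the assortative case), then every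
solution with positive initial mass satisfies
`lim_{t→∞} μ_t(F) = (p − D)/(IU)`; moreover the set
`𝒜 = {μ : μ(F) = (p−D)/(IU)}` is invariant under the equation. -/
theorem mass_stabilization_and_attractor
    {d : ℕ} (F : Set (EuclideanSpace ℝ (Fin d)))
    (hFclosed : IsClosed F) (hFconn : IsConnected F)
    (hFint : (interior F).Nonempty)
    (K : EuclideanSpace ℝ (Fin d) → EuclideanSpace ℝ (Fin d) →
      Measure (EuclideanSpace ℝ (Fin d)))
    (hKprob : ∀ x y, IsProbabilityMeasure (K x y))
    (hKsupp : ∀ x ∈ F, ∀ y ∈ F, K x y Fᶜ = 0)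
    (hKsymm : ∀ x y, K x y = K y x)
    (hKmeas : ∀ A : Set (EuclideanSpace ℝ (Fin d)), MeasurableSet A →
      Measurable (fun q : EuclideanSpace ℝ (Fin d) × EuclideanSpace ℝ (Fin d) =>
        K q.1 q.2 A))
    -- constant coefficients
    (p D I U : ℝ)
    (hppos : 0 < p) (hDpos : 0 < D) (hIpos : 0 < I) (hUpos : 0 < U)
    (m : EuclideanSpace ℝ (Fin d) → EuclideanSpace ℝ (Fin d) →
      Measure (EuclideanSpace ℝ (Fin d)) → ℝ)
    -- either semi-random mating with D < p, or assortative mating with D < 1 =: p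
    (hcase :
      (D < p ∧ m = semiRandomRate (fun _ => p)) ∨
      (p = 1 ∧ D < 1 ∧ ∃ a : EuclideanSpace ℝ (Fin d) → EuclideanSpace ℝ (Fin d) → ℝ,
        (∀ x y, a x y = a y x) ∧
        Measurable (fun q : EuclideanSpace ℝ (Fin d) × EuclideanSpace ℝ (Fin d) => a q.1 q.2) ∧
        (∃ al au : ℝ, 0 < al ∧ (∀ x ∈ F, ∀ y ∈ F, al ≤ a x y ∧ a x y ≤ au)) ∧
        m = assortativeRate a))
    (μ₀ : Measure (EuclideanSpace ℝ (Fin d)))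
    (hμ₀fin : IsFiniteMeasure μ₀) (hμ₀supp : μ₀ Fᶜ = 0)
    (hμ₀pos : 0 < μ₀ F)
    (μ : ℝ → Measure (EuclideanSpace ℝ (Fin d)))
    (hμ : IsMildSolution F m K (fun _ => D) (fun _ => I) (fun _ _ => U) μ₀ μ) :
    -- the total mass converges to the carrying capacity (p − D)/(IU),
    -- i.e. every solution with positive initial mass converges to the set 𝒜
    Tendsto (fun t => (μ t F).toReal) atTop (nhds ((p - D) / (I * U))) ∧
    -- the set 𝒜 = {μ : μ(F) = (p−D)/(IU)} is invariant under the equation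
    (∀ (ν₀ : Measure (EuclideanSpace ℝ (Fin d)))
        (ν : ℝ → Measure (EuclideanSpace ℝ (Fin d))),
      IsFiniteMeasure ν₀ → ν₀ Fᶜ = 0 →
      IsMildSolution F m K (fun _ => D) (fun _ => I) (fun _ _ => U) ν₀ ν →
      ν₀ F = ENNReal.ofReal ((p - D) / (I * U)) →
      ∀ t : ℝ, 0 ≤ t → ν t F = ENNReal.ofReal ((p - D) / (I * U))) :=
  mass_stabilization_and_attractor_general F K hKprob p D I U hppos hIpos hUpos m hcase μ₀ hμ₀pos μ
    hμ

end
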